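/- Let φ ∈ C^∞(ℝ²,ℝ), let a_i, a_j ∈ ℝ² and δa_i, δa_j ∈ ℝ², and let v ∈ ℝ² satisfy φ(v) = 0 and ‖v − a_i‖ = ‖v − a_j‖. Let d := det of the 2×2 matrix whose rows are (a_j − a_i)ᵀ and ∇φ(v)ᵀ, and assume d ≠ 0. Then there exist τ₁ > 0 and a unique smooth function z_v : [0,τ₁] → ℝ² with z_v(0) = v such that φ(z_v(t)) = 0 and ‖z_v(t) − (a_i + tδa_i)‖ = ‖z_v(t) − (a_j + tδa_j)‖ for all t ∈ [0,τ₁]; moreover z_v′(0) = 𝓜(j,i)δa_i + 𝓜(i,j)δa_j, where 𝓜(j,i) := −(1/d) · ∇φ(v)^⊥ ⊗ (v − a_i)ᵀ and 𝓜(i,j) := (1/d) · ∇φ(v)^⊥ ⊗ (v − a_j)ᵀ. -/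

import Mathlib

open Set Metric
open scoped ENNReal NNReal

noncomputable section

/-- The plane ℝ². -/
abbrev Plane : Type := EuclideanSpace ℝ (Fin 2)

/-- Rotation by π/2: `(v₁,v₂)^⊥ = (−v₂,v₁)`. -/
def perp (w : Plane) : Plane := (WithLp.equiv 2 (Fin 2 → ℝ)).symm ![-(w 1), w 0]

/-- The Euclidean Voronoi cell
`V_i(a) = int {x ∈ A : ‖x − a_i‖ ≤ ‖x − a_k‖ for all k}`. -/
def vorCell {κ : ℕ} (A : Set Plane) (a : Fin κ → Plane) (i : Fin κ) : Set Plane :=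
  interior {x | x ∈ A ∧ ∀ k, ‖x - a i‖ ≤ ‖x - a k‖}

/-! ### Auxiliary material for Statement 13 -/

lemma perp0 (x : Plane) : perp x 0 = -(x 1) := rfl
lemma perp1 (x : Plane) : perp x 1 = x 0 := rfl

lemma inner_expand (x y : Plane) : (inner ℝ x y : ℝ) = x 0 * y 0 + x 1 * y 1 := by
  simp [PiLp.inner_apply, Fin.sum_univ_two, RCLike.inner_apply, conj_trivial]; ring

lemma inner_perp (x y : Plane) : (inner ℝ y (perp x) : ℝ) = x 0 * y 1 - x 1 * y 0 := by
  rw [inner_expand, perp0, perp1]; ring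

lemma plane_reconstruct (u g h : Plane) (d : ℝ) (hd : d = u 0 * g 1 - u 1 * g 0)
    (hdne : d ≠ 0) :
    ((inner ℝ g h : ℝ)/d) • perp u + (-(inner ℝ u h : ℝ)/d) • perp g = h := by
  subst hd
  ext i
  fin_cases i <;>
  · simp only [PiLp.add_apply, PiLp.smul_apply, inner_expand, smul_eq_mul, perp,
      WithLp.equiv_symm_apply, WithLp.ofLp_toLp, Matrix.cons_val_zero, Matrix.cons_val_one, Matrix.head_cons,
      Fin.zero_eta, Fin.mk_one]
    field_simp
    rw [div_eq_iff (by intro h0; apply hdne; linarith)]; ring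

lemma norm_eq_iff_inner_sub (x y : Plane) :
    ‖x‖ = ‖y‖ ↔ (inner ℝ x x : ℝ) - (inner ℝ y y : ℝ) = 0 := by
  rw [real_inner_self_eq_norm_sq, real_inner_self_eq_norm_sq, sub_eq_zero]
  constructor
  · intro h; rw [h]
  · intro h
    have h' := congrArg Real.sqrt h
    rwa [Real.sqrt_sq (norm_nonneg _), Real.sqrt_sq (norm_nonneg _)] at h'

/-- The linearization of the constraint map. -/
def Amap (g u : Plane) (e : ℝ) : (ℝ × Plane) →L[ℝ] ℝ × ℝ × ℝ :=
  (ContinuousLinearMap.fst ℝ ℝ Plane).prod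
    ((((innerSL ℝ) g).comp (ContinuousLinearMap.snd ℝ ℝ Plane)).prod
      ((2:ℝ) • (((innerSL ℝ) u).comp (ContinuousLinearMap.snd ℝ ℝ Plane))
        + e • (ContinuousLinearMap.fst ℝ ℝ Plane)))

/-- The inverse of the linearization. -/
def Bmap (g u : Plane) (e d : ℝ) : (ℝ × ℝ × ℝ) →L[ℝ] ℝ × Plane :=
  (ContinuousLinearMap.fst ℝ ℝ (ℝ × ℝ)).prod
    (((d⁻¹ • ((ContinuousLinearMap.fst ℝ ℝ ℝ).comp
        (ContinuousLinearMap.snd ℝ ℝ (ℝ × ℝ)))).smulRight (perp u))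
     + (((2*d)⁻¹ • (e • (ContinuousLinearMap.fst ℝ ℝ (ℝ × ℝ))
          - (ContinuousLinearMap.snd ℝ ℝ ℝ).comp
            (ContinuousLinearMap.snd ℝ ℝ (ℝ × ℝ)))).smulRight (perp g)))

lemma Amap_apply (g u : Plane) (e : ℝ) (p : ℝ × Plane) :
    Amap g u e p = (p.1, (inner ℝ g p.2 : ℝ), 2 * (inner ℝ u p.2 : ℝ) + e * p.1) := by
  simp [Amap]

lemma Bmap_apply (g u : Plane) (e d : ℝ) (q : ℝ × ℝ × ℝ) :
    Bmap g u e d q = (q.1, (d⁻¹ * q.2.1) • perp u + ((2*d)⁻¹ * (e * q.1 - q.2.2)) • perp g) := by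
  simp [Bmap, sub_smul]

/-- The linearization as a continuous linear equivalence. -/
def ABe (g u : Plane) (e d : ℝ) (hd : d = u 0 * g 1 - u 1 * g 0) (hdne : d ≠ 0) :
    (ℝ × Plane) ≃L[ℝ] ℝ × ℝ × ℝ :=
  ContinuousLinearEquiv.equivOfInverse (Amap g u e) (Bmap g u e d)
    (fun p => by
      rw [Amap_apply, Bmap_apply]
      refine Prod.ext rfl ?_
      have h1 : d⁻¹ * (inner ℝ g p.2 : ℝ) = (inner ℝ g p.2 : ℝ)/d := by ring
      have h2 : (2*d)⁻¹ * (e * p.1 - (2 * (inner ℝ u p.2 : ℝ) + e * p.1))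
          = -(inner ℝ u p.2 : ℝ)/d := by field_simp; ring
      rw [h1, h2]
      exact plane_reconstruct u g p.2 d hd hdne)
    (fun q => by
      rw [Bmap_apply, Amap_apply]
      have hgu : (inner ℝ g (perp u) : ℝ) = d := by rw [inner_perp, hd]
      have hgg : (inner ℝ g (perp g) : ℝ) = 0 := by rw [inner_perp]; ring
      have huu : (inner ℝ u (perp u) : ℝ) = 0 := by rw [inner_perp]; ring
      have hug : (inner ℝ u (perp g) : ℝ) = -d := by rw [inner_perp, hd]; ring
      refine Prod.ext rfl (Prod.ext ?_ ?_) <;>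
        simp only [inner_add_right, real_inner_smul_right, hgu, hgg, huu, hug]
      · field_simp; ring
      · field_simp; ring)

/-- The constraint map. -/
def Phi (φ : Plane → ℝ) (ai aj δai δaj : Plane) (p : ℝ × Plane) : ℝ × ℝ × ℝ :=
  (p.1, φ p.2,
    (inner ℝ (p.2 - (ai + p.1 • δai)) (p.2 - (ai + p.1 • δai)) : ℝ)
      - (inner ℝ (p.2 - (aj + p.1 • δaj)) (p.2 - (aj + p.1 • δaj)) : ℝ))

lemma Phi_contDiff (φ : Plane → ℝ) (hφ : ContDiff ℝ (⊤ : ℕ∞) φ) (ai aj δai δaj : Plane) :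
    ContDiff ℝ (⊤ : ℕ∞) (Phi φ ai aj δai δaj) := by
  have hm : ∀ c δ : Plane, ContDiff ℝ ((⊤:ℕ∞)) (fun p : ℝ × Plane => p.2 - (c + p.1 • δ)) :=
    fun c δ => contDiff_snd.sub (contDiff_const.add (contDiff_fst.smul contDiff_const))
  exact contDiff_fst.prodMk ((hφ.comp contDiff_snd).prodMk
    (((hm ai δai).inner ℝ (hm ai δai)).sub ((hm aj δaj).inner ℝ (hm aj δaj))))

lemma Phi_hasFDerivAt (φ : Plane → ℝ) (hφ : ContDiff ℝ (⊤ : ℕ∞) φ) (ai aj δai δaj v : Plane) :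
    HasFDerivAt (Phi φ ai aj δai δaj)
      (Amap (gradient φ v) (aj - ai)
        (2 * (inner ℝ (v - aj) δaj : ℝ) - 2 * (inner ℝ (v - ai) δai : ℝ))) ((0:ℝ), v) := by
  have hone : ((⊤ : ℕ∞) : WithTop ℕ∞) ≠ 0 := by simp
  have hgrad : HasFDerivAt φ (InnerProductSpace.toDual ℝ Plane (gradient φ v)) v :=
    ((hφ.differentiable hone) v).hasGradientAt.hasFDerivAt
  have h2 : HasFDerivAt (fun p : ℝ × Plane => φ p.2)
      ((InnerProductSpace.toDual ℝ Plane (gradient φ v) : Plane →L[ℝ] ℝ).comp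
        (ContinuousLinearMap.snd ℝ ℝ Plane)) ((0:ℝ), v) :=
    hgrad.comp _ hasFDerivAt_snd
  have hm : ∀ c δ : Plane, HasFDerivAt (fun p : ℝ × Plane => p.2 - (c + p.1 • δ))
      ((ContinuousLinearMap.snd ℝ ℝ Plane) - (ContinuousLinearMap.fst ℝ ℝ Plane).smulRight δ)
      ((0:ℝ), v) := by
    intro c δ
    exact hasFDerivAt_snd.sub ((hasFDerivAt_fst.smul_const δ).const_add c)
  have h3i := (hm ai δai).inner ℝ (hm ai δai)
  have h3j := (hm aj δaj).inner ℝ (hm aj δaj)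
  have h3 := h3i.sub h3j
  have hAll := hasFDerivAt_fst.prodMk (h2.prodMk h3)
  refine hAll.congr_fderiv ?_
  symm
  apply ContinuousLinearMap.ext
  rintro ⟨s, h⟩
  refine Prod.ext (by simp [Amap]) (Prod.ext ?_ ?_)
  · simp [Amap, InnerProductSpace.toDual_apply_apply]
  · show 2 * (inner ℝ (aj - ai) h : ℝ) + _ * s = _
    simp only [Amap_apply, ContinuousLinearMap.prod_apply, ContinuousLinearMap.comp_apply,
      ContinuousLinearMap.sub_apply, ContinuousLinearMap.coe_fst', ContinuousLinearMap.coe_snd',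
      ContinuousLinearMap.smulRight_apply, fderivInnerCLM_apply, Prod.fst, Prod.snd]
    simp only [inner_expand, PiLp.sub_apply, PiLp.add_apply, PiLp.smul_apply, smul_eq_mul,
      zero_mul, zero_smul, PiLp.zero_apply, mul_zero]
    ring

/-- perturbation of a boundary Voronoi vertex: if `φ(v) = 0`,
`v` is equidistant from `a_i` and `a_j`, and the determinant `d` of the matrix
with rows `(a_j − a_i)ᵀ` and `∇φ(v)ᵀ` is nonzero, then for small time there is a
unique smooth curve `z_v` with `z_v(0) = v` staying on `{φ = 0}` and remaining
equidistant from the perturbed sites, and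
`z_v′(0) = 𝓜(j,i)δa_i + 𝓜(i,j)δa_j` where
`𝓜(j,i) = −(∇φ(v)^⊥ ⊗ (v − a_i)ᵀ)/d` and `𝓜(i,j) = (∇φ(v)^⊥ ⊗ (v − a_j)ᵀ)/d`. -/
theorem statement13
    (φ : Plane → ℝ) (hφ : ContDiff ℝ (⊤ : ℕ∞) φ)
    (ai aj : Plane) (δai δaj : Plane)
    (v : Plane)
    (hv0 : φ v = 0)
    (hvij : ‖v - ai‖ = ‖v - aj‖)
    (d : ℝ)
    (hd : d = Matrix.det
      !![(aj - ai) 0, (aj - ai) 1; gradient φ v 0, gradient φ v 1])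
    (hdne : d ≠ 0) :
    ∃ τ₁ > (0:ℝ), ∃ z : ℝ → Plane,
      (ContDiffOn ℝ (⊤ : ℕ∞) z (Icc 0 τ₁) ∧ z 0 = v ∧
        ∀ t ∈ Icc (0:ℝ) τ₁,
          φ (z t) = 0 ∧
          ‖z t - (ai + t • δai)‖ = ‖z t - (aj + t • δaj)‖) ∧
      -- uniqueness of the smooth curve on `[0,τ₁]`
      (∀ w : ℝ → Plane,
        (ContDiffOn ℝ (⊤ : ℕ∞) w (Icc 0 τ₁) ∧ w 0 = v ∧
          ∀ t ∈ Icc (0:ℝ) τ₁,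
            φ (w t) = 0 ∧
            ‖w t - (ai + t • δai)‖ = ‖w t - (aj + t • δaj)‖) →
        EqOn w z (Icc 0 τ₁)) ∧
      -- `z_v′(0) = 𝓜(j,i)δa_i + 𝓜(i,j)δa_j`
      HasDerivWithinAt z
        ((-((inner ℝ (v - ai) δai : ℝ) / d)) • perp (gradient φ v)
          + ((inner ℝ (v - aj) δaj : ℝ) / d) • perp (gradient φ v))
        (Icc 0 τ₁) 0 := by
  have hone : ((⊤ : ℕ∞) : WithTop ℕ∞) ≠ 0 := by simp
  set g := gradient φ v with hgdef
  set u := aj - ai with hudef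
  set e : ℝ := 2 * (inner ℝ (v - aj) δaj : ℝ) - 2 * (inner ℝ (v - ai) δai : ℝ) with hedef
  have hd' : d = u 0 * g 1 - u 1 * g 0 := by rw [hd, Matrix.det_fin_two_of]
  set Φ := Phi φ ai aj δai δaj with hΦdef
  have hΦc : ContDiff ℝ (⊤:ℕ∞) Φ := Phi_contDiff φ hφ ai aj δai δaj
  set E := ABe g u e d hd' hdne with hEdef
  have hΦd : HasFDerivAt Φ (E : (ℝ × Plane) →L[ℝ] ℝ × ℝ × ℝ) ((0:ℝ), v) :=
    Phi_hasFDerivAt φ hφ ai aj δai δaj v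
  have hstrict : HasStrictFDerivAt Φ (E : (ℝ × Plane) →L[ℝ] ℝ × ℝ × ℝ) ((0:ℝ), v) :=
    hΦc.contDiffAt.hasStrictFDerivAt' hΦd hone
  set P := hstrict.toOpenPartialHomeomorph Φ with hPdef
  have hPcoe : (P : ℝ × Plane → ℝ × ℝ × ℝ) = Φ := rfl
  have hsrc : ((0:ℝ), v) ∈ P.source := hstrict.mem_toOpenPartialHomeomorph_source
  have hΦ0 : Φ ((0:ℝ), v) = ((0:ℝ), (0:ℝ), (0:ℝ)) := by
    have h3 := (norm_eq_iff_inner_sub (v - ai) (v - aj)).mp hvij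
    refine Prod.ext rfl (Prod.ext hv0 ?_)
    simp only [hΦdef, Phi]
    simpa using h3
  have htgt : ((0:ℝ), (0:ℝ), (0:ℝ)) ∈ P.target := hΦ0 ▸ P.map_source hsrc
  have hsymm0 : P.symm ((0:ℝ), (0:ℝ), (0:ℝ)) = ((0:ℝ), v) := by
    rw [← hΦ0]; exact P.left_inv hsrc
  -- the open set where the derivative of Φ is invertible
  set W : Set (ℝ × Plane) :=
    (fderiv ℝ Φ) ⁻¹' (range ((↑) : ((ℝ × Plane) ≃L[ℝ] ℝ × ℝ × ℝ) → (ℝ × Plane) →L[ℝ] ℝ × ℝ × ℝ))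
    with hWdef
  have hWopen : IsOpen W :=
    ContinuousLinearEquiv.isOpen.preimage (hΦc.continuous_fderiv hone)
  have hvW : ((0:ℝ), v) ∈ W := by
    simp only [hWdef, mem_preimage]
    rw [hΦd.fderiv]
    exact mem_range_self E
  -- smoothness of the local inverse near (0,0,0)
  set V : Set (ℝ × ℝ × ℝ) := P.target ∩ P.symm ⁻¹' W with hVdef
  have hVopen : IsOpen V := P.symm.isOpen_inter_preimage hWopen
  have h0V : ((0:ℝ), (0:ℝ), (0:ℝ)) ∈ V := by
    refine ⟨htgt, ?_⟩
    show P.symm _ ∈ W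
    rw [hsymm0]; exact hvW
  have hψsmooth : ∀ q ∈ V, ContDiffAt ℝ (⊤:ℕ∞) P.symm q := by
    rintro q ⟨hq, hqW⟩
    obtain ⟨Eq, hEq⟩ := hqW
    have hdiff : HasFDerivAt Φ (Eq : (ℝ × Plane) →L[ℝ] ℝ × ℝ × ℝ) (P.symm q) := by
      rw [hEq]
      exact ((hΦc.differentiable hone) (P.symm q)).hasFDerivAt
    exact P.contDiffAt_symm hq hdiff hΦc.contDiffAt
  -- the curve
  set γ : ℝ → ℝ × ℝ × ℝ := fun t => (t, (0:ℝ), (0:ℝ)) with hγdef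
  have hγs : ContDiff ℝ (⊤:ℕ∞) γ := contDiff_id.prodMk contDiff_const
  have hγV : γ ⁻¹' V ∈ nhds (0:ℝ) :=
    hγs.continuous.continuousAt.preimage_mem_nhds (hVopen.mem_nhds h0V)
  obtain ⟨ε, hεpos, hball⟩ := Metric.mem_nhds_iff.mp hγV
  set τ₁ := ε/2 with hτdef
  have hτpos : 0 < τ₁ := by positivity
  have hIccV : ∀ t ∈ Icc (0:ℝ) τ₁, γ t ∈ V := by
    intro t ht
    apply hball
    rw [mem_ball, Real.dist_eq, sub_zero, abs_of_nonneg ht.1]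
    calc t ≤ ε/2 := ht.2
    _ < ε := by linarith
  set z : ℝ → Plane := fun t => (P.symm (γ t)).2 with hzdef
  have hPt : ∀ t ∈ Icc (0:ℝ) τ₁, P.symm (γ t) = (t, z t) := by
    intro t ht
    have h1 : Φ (P.symm (γ t)) = γ t := P.right_inv (hIccV t ht).1
    have h2 : (Φ (P.symm (γ t))).1 = (P.symm (γ t)).1 := rfl
    refine Prod.ext ?_ rfl
    rw [← h2, h1]
  have hΦz : ∀ t ∈ Icc (0:ℝ) τ₁, Φ (t, z t) = γ t := by
    intro t ht
    rw [← hPt t ht]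
    exact P.right_inv (hIccV t ht).1
  have hz0 : z 0 = v := by
    show (P.symm (γ 0)).2 = v
    have : γ 0 = ((0:ℝ), (0:ℝ), (0:ℝ)) := rfl
    rw [this, hsymm0]
  have hzdiff : ContDiffOn ℝ (⊤:ℕ∞) z (Icc 0 τ₁) := by
    intro t ht
    have cψ : ContDiffAt ℝ (⊤:ℕ∞) P.symm (γ t) := hψsmooth (γ t) (hIccV t ht)
    exact ((contDiff_snd.contDiffAt.comp _ (cψ.comp t hγs.contDiffAt))).contDiffWithinAt
  have hzcon : ∀ t ∈ Icc (0:ℝ) τ₁,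
      φ (z t) = 0 ∧ ‖z t - (ai + t • δai)‖ = ‖z t - (aj + t • δaj)‖ := by
    intro t ht
    have h := hΦz t ht
    have h2 : φ (z t) = 0 := congrArg (fun q => q.2.1) h
    have h3 : (inner ℝ (z t - (ai + t • δai)) (z t - (ai + t • δai)) : ℝ)
        - (inner ℝ (z t - (aj + t • δaj)) (z t - (aj + t • δaj)) : ℝ) = 0 :=
      congrArg (fun q => q.2.2) h
    exact ⟨h2, (norm_eq_iff_inner_sub _ _).mpr h3⟩
  refine ⟨τ₁, hτpos, z, ⟨hzdiff, hz0, hzcon⟩, ?_, ?_⟩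
  · -- uniqueness
    rintro w ⟨hwc, hw0, hwcon⟩
    haveI : PreconnectedSpace (Icc (0:ℝ) τ₁) := Subtype.preconnectedSpace isPreconnected_Icc
    set S : Set (Icc (0:ℝ) τ₁) := {x | w ↑x = z ↑x} with hSdef
    have hwc' : Continuous fun x : Icc (0:ℝ) τ₁ => w ↑x :=
      (hwc.continuousOn).restrict
    have hzc' : Continuous fun x : Icc (0:ℝ) τ₁ => z ↑x :=
      (hzdiff.continuousOn).restrict
    have hSeq : S = (fun x : Icc (0:ℝ) τ₁ => ((x : ℝ), w ↑x)) ⁻¹' P.source := by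
      ext x
      constructor
      · intro hx
        have hx' : w ↑x = z ↑x := hx
        show ((x : ℝ), w ↑x) ∈ P.source
        rw [hx', ← hPt ↑x x.2]
        exact P.map_target (hIccV ↑x x.2).1
      · intro hx
        have hΦw : Φ ((x : ℝ), w ↑x) = γ ↑x := by
          refine Prod.ext rfl (Prod.ext (hwcon ↑x x.2).1 ?_)
          exact (norm_eq_iff_inner_sub _ _).mp (hwcon ↑x x.2).2
        have hmem2 : P.symm (γ ↑x) ∈ P.source := P.map_target (hIccV ↑x x.2).1
        have heq : Φ ((x : ℝ), w ↑x) = Φ (P.symm (γ ↑x)) := by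
          rw [hΦw]
          exact (P.right_inv (hIccV ↑x x.2).1).symm
        show w ↑x = z ↑x
        exact congrArg Prod.snd (P.injOn hx hmem2 heq)
    have hSopen : IsOpen S := by
      rw [hSeq]
      exact P.open_source.preimage (continuous_subtype_val.prodMk hwc')
    have hSclosed : IsClosed S := isClosed_eq hwc' hzc'
    have hSne : S.Nonempty := by
      refine ⟨⟨0, le_refl 0, le_of_lt hτpos⟩, ?_⟩
      show w 0 = z 0
      rw [hw0, hz0]
    have := (IsClopen.eq_univ ⟨hSclosed, hSopen⟩ hSne : S = univ)
    intro t ht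
    have hx : (⟨t, ht⟩ : Icc (0:ℝ) τ₁) ∈ S := this ▸ mem_univ _
    exact hx
  · -- derivative at 0
    have hloc := hstrict.to_localInverse
    rw [hstrict.localInverse_def, hΦ0] at hloc
    have hγd : HasDerivAt γ ((1:ℝ), (0:ℝ), (0:ℝ)) 0 :=
      (hasDerivAt_id 0).prodMk ((hasDerivAt_const 0 (0:ℝ)).prodMk (hasDerivAt_const 0 (0:ℝ)))
    have hγ00 : γ 0 = ((0:ℝ), (0:ℝ), (0:ℝ)) := rfl
    have hcomp : HasDerivAt (fun t => P.symm (γ t))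
        ((E.symm : (ℝ × ℝ × ℝ) →L[ℝ] ℝ × Plane) ((1:ℝ), (0:ℝ), (0:ℝ))) 0 :=
      hloc.hasFDerivAt.comp_hasDerivAt_of_eq 0 hγd rfl
    have hzD : HasDerivAt z (((E.symm : (ℝ × ℝ × ℝ) →L[ℝ] ℝ × Plane)
        ((1:ℝ), (0:ℝ), (0:ℝ))).2) 0 :=
      (hasFDerivAt_snd (𝕜 := ℝ) (E := ℝ) (F := Plane) (p := P.symm (γ 0))).comp_hasDerivAt_of_eq 0 hcomp rfl
    have hval : ((E.symm : (ℝ × ℝ × ℝ) →L[ℝ] ℝ × Plane) ((1:ℝ), (0:ℝ), (0:ℝ))).2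
        = (-((inner ℝ (v - ai) δai : ℝ) / d)) • perp g
          + ((inner ℝ (v - aj) δaj : ℝ) / d) • perp g := by
      have hB : (E.symm : (ℝ × ℝ × ℝ) →L[ℝ] ℝ × Plane) ((1:ℝ), (0:ℝ), (0:ℝ))
          = Bmap g u e d ((1:ℝ), (0:ℝ), (0:ℝ)) := rfl
      rw [hB, Bmap_apply]
      show (d⁻¹ * 0) • perp u + ((2*d)⁻¹ * (e * 1 - 0)) • perp g = _
      rw [mul_zero, zero_smul, zero_add, ← add_smul]
      congr 1
      rw [hedef]
      field_simp
      ring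
    rw [← hval]
    exact hzD.hasDerivWithinAt
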